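/- Let (C, ⊗) be a locally presentable closed symmetric monoidal abelian category whose monoidal unit V is a finitely presented projective separator. Let f : X0 → X1 and g : Y0 → Y1 be morphisms of C all of whose sources and targets X0, X1, Y0, Y1 are finitely generated. Then the pushout product f □ g : (X0 ⊗ Y1) ⊔_{X0 ⊗ Y0} (X1 ⊗ Y0) → X1 ⊗ Y1 has finitely generated source and target; that is, f □ g is a finitely generated object of the arrow category Ar(C). -/

import Mathlib

open CategoryTheory CategoryTheory.Limits Opposite

universe v u

namespace Paper

variable {C : Type u} [Category.{v} C]

/-- The canonical comparison map `colim_α Hom(X, M_α) ⟶ Hom(X, colim_α M_α)` induced by the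
structure morphisms of a cocone `c` on a diagram `D`. -/
noncomputable def canonicalMap (X : C) {J : Type v} [SmallCategory J]
    (D : J ⥤ C) (c : Cocone D) :
    colimit (D ⋙ coyoneda.obj (op X)) → (X ⟶ c.pt) :=
  colimit.desc (D ⋙ coyoneda.obj (op X)) ((coyoneda.obj (op X)).mapCocone c)

/-- An object `X` is finitely presented if for every filtered inductive system the canonical map
`colim_α Hom(X, M_α) → Hom(X, colim_α M_α)` is bijective. -/
def IsFinitelyPresented (X : C) : Prop :=
  ∀ (J : Type v) [SmallCategory J] [IsFiltered J] (D : J ⥤ C) (c : Cocone D),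
    IsColimit c → Function.Bijective (canonicalMap X D c)

/-- An object `X` is finitely generated if for every filtered inductive system the canonical map
`colim_α Hom(X, M_α) → Hom(X, colim_α M_α)` is injective. -/
def IsFinitelyGenerated (X : C) : Prop :=
  ∀ (J : Type v) [SmallCategory J] [IsFiltered J] (D : J ⥤ C) (c : Cocone D),
    IsColimit c → Function.Injective (canonicalMap X D c)

/-- A small category `J` is `κ`-filtered if every diagram in `J` of size `< κ` admits a cocone. -/
def IsCardinalFiltered (J : Type v) [SmallCategory J] (κ : Cardinal.{v}) : Prop :=
  ∀ (K : Type v) [SmallCategory K], Cardinal.mk (Σ k k' : K, k ⟶ k') < κ →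
    ∀ F : K ⥤ J, Nonempty (Cocone F)

/-- An object `X` is `κ`-presentable if `Hom(X, -)` preserves `κ`-filtered colimits. -/
def IsCardinalPresentableObj (κ : Cardinal.{v}) (X : C) : Prop :=
  ∀ (J : Type v) [SmallCategory J], IsCardinalFiltered J κ →
    ∀ (D : J ⥤ C) (c : Cocone D), IsColimit c → Function.Bijective (canonicalMap X D c)

/-- A presentation of `X` as a `κ`-filtered colimit of objects belonging to `S`. -/
structure FilteredPresentation (κ : Cardinal.{v}) (S : Set C) (X : C) where
  J : Type v
  [cat : SmallCategory J]
  filtered : IsCardinalFiltered J κ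
  D : J ⥤ C
  mem : ∀ j, D.obj j ∈ S
  c : Cocone D
  isColimit : IsColimit c
  eq : c.pt = X

attribute [instance] FilteredPresentation.cat

/-- A category is locally presentable if it is cocomplete and there are a regular cardinal `κ`
and a set of `κ`-presentable objects such that every object is a `κ`-filtered colimit of
objects from this set. -/
class LocallyPresentable (C : Type u) [Category.{v} C] : Prop where
  hasColimits : HasColimits C
  presentable : ∃ κ : Cardinal.{v}, κ.IsRegular ∧ ∃ S : Set C, Small.{v} ↥S ∧
    (∀ X ∈ S, IsCardinalPresentableObj κ X) ∧ ∀ X : C, Nonempty (FilteredPresentation κ S X)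

instance (priority := 100) [LocallyPresentable C] : HasColimits C :=
  LocallyPresentable.hasColimits

end Paper

/-!
Finitely generated objects are closed under finite jointly epimorphic families. As the unit
separates, a finitely generated `Y` is covered by finitely many maps `𝟙_ C ⟶ Y`; since `X ⊗ -`
is a left adjoint, the induced maps `X ≅ X ⊗ 𝟙_ C ⟶ X ⊗ Y` cover `X ⊗ Y`. The source of
`f □ g` is covered by `X0 ⊗ Y1` and `X1 ⊗ Y0`.
-/

namespace Paper

open MonoidalCategory

variable {C : Type u} [Category.{v} C]

@[simp]
lemma canonicalMap_ι (X : C) {J : Type v} [SmallCategory J] (D : J ⥤ C) (c : Cocone D)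
    (j : J) (x : X ⟶ D.obj j) :
    canonicalMap X D c (colimit.ι (D ⋙ coyoneda.obj (op X)) j x) = x ≫ c.ι.app j :=
  ConcreteCategory.congr_hom (colimit.ι_desc ((coyoneda.obj (op X)).mapCocone c) j) x

theorem isFinitelyGenerated_iff {X : C} : IsFinitelyGenerated X ↔
    ∀ (J : Type v) [SmallCategory J] [IsFiltered J] (D : J ⥤ C) (c : Cocone D), IsColimit c →
      ∀ (j : J) (u v : X ⟶ D.obj j), u ≫ c.ι.app j = v ≫ c.ι.app j →
        ∃ (k : J) (φ : j ⟶ k), u ≫ D.map φ = v ≫ D.map φ := by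
  constructor
  · intro hX J _ _ D c hc j u v huv
    refine (Types.FilteredColimit.isColimit_eq_iff'
      (colimit.isColimit (D ⋙ coyoneda.obj (op X))) u v).1 ?_
    exact hX J D c hc (by rw [colimit.cocone_ι, canonicalMap_ι, canonicalMap_ι, huv])
  · intro hX J _ _ D c hc a b hab
    obtain ⟨j, u, v, rfl, rfl⟩ :=
      Types.FilteredColimit.jointly_surjective_of_isColimit₂ (colimit.isColimit _) a b
    rw [colimit.cocone_ι, canonicalMap_ι, canonicalMap_ι] at hab
    exact (Types.FilteredColimit.isColimit_eq_iff' (colimit.isColimit _) u v).2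
      (hX J D c hc j u v hab)

lemma isFinitelyGenerated_of_jointlyEpi {ι : Type*} [Finite ι] {x : ι → C} {X : C}
    (t : ∀ i, x i ⟶ X) (hx : ∀ i, IsFinitelyGenerated (x i))
    (ht : ∀ {Z : C} (a b : X ⟶ Z), (∀ i, t i ≫ a = t i ≫ b) → a = b) :
    IsFinitelyGenerated X := by
  classical
  rw [isFinitelyGenerated_iff]
  intro J _ _ D c hc j u v huv
  have hfin : ∀ s : Finset ι, ∃ (k : J) (φ : j ⟶ k),
      ∀ i ∈ s, t i ≫ u ≫ D.map φ = t i ≫ v ≫ D.map φ := by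
    intro s
    induction s using Finset.induction_on with
    | empty => exact ⟨j, 𝟙 j, by simp⟩
    | insert i s _ ih =>
      obtain ⟨k, φ, hk⟩ := ih
      obtain ⟨k', ψ, hψ⟩ := isFinitelyGenerated_iff.1 (hx i) J D c hc k
        (t i ≫ u ≫ D.map φ) (t i ≫ v ≫ D.map φ) (by simp [huv])
      refine ⟨k', φ ≫ ψ, Finset.forall_mem_insert _ _ _ |>.2 ⟨?_, fun i' hi' => ?_⟩⟩
      · simpa using hψ
      · simpa using hk i' hi' =≫ D.map ψ
  have := Fintype.ofFinite ι
  obtain ⟨k, φ, hk⟩ := hfin Finset.univ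
  exact ⟨k, φ, ht _ _ fun i => hk i (Finset.mem_univ i)⟩

lemma isFinitelyGenerated_pushout {Z A B : C} (f : Z ⟶ A) (g : Z ⟶ B) [HasPushout f g]
    (hA : IsFinitelyGenerated A) (hB : IsFinitelyGenerated B) :
    IsFinitelyGenerated (pushout f g) :=
  isFinitelyGenerated_of_jointlyEpi (x := fun b => cond b A B)
    (fun | true => pushout.inl f g | false => pushout.inr f g)
    (fun | true => hA | false => hB)
    fun _ _ h => pushout.hom_ext (h true) (h false)

section Separator

open ZeroObject

variable [HasFiniteCoproducts C]

noncomputable def descFinset (V X : C) (s : Finset (V ⟶ X)) :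
    (∐ fun _ : s => V) ⟶ X :=
  Sigma.desc fun h => h.1

@[simp]
lemma ι_descFinset {V X : C} {s : Finset (V ⟶ X)} {h : V ⟶ X} (hh : h ∈ s) :
    Sigma.ι (fun _ : s => V) ⟨h, hh⟩ ≫ descFinset V X s = h :=
  Sigma.ι_desc _ _

variable [Preadditive C] [HasCokernels C]

lemma comp_cokernel_π_descFinset {V X : C} {s : Finset (V ⟶ X)} {h : V ⟶ X} (hh : h ∈ s) :
    h ≫ cokernel.π (descFinset V X s) = 0 := by
  rw [← ι_descFinset hh, Category.assoc, cokernel.condition, comp_zero]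

lemma descFinset_comp_cokernel_π {V X : C} {s t : Finset (V ⟶ X)} (hst : s ≤ t) :
    descFinset V X s ≫ cokernel.π (descFinset V X t) = 0 :=
  Sigma.hom_ext _ _ fun ⟨h, hh⟩ => by
    rw [← Category.assoc, ι_descFinset, comp_zero, comp_cokernel_π_descFinset (hst hh)]

noncomputable def cokernelDiagram (V X : C) : Finset (V ⟶ X) ⥤ C where
  obj s := cokernel (descFinset V X s)
  map φ := cokernel.desc _ _ (descFinset_comp_cokernel_π (leOfHom φ))
  map_id _ := coequalizer.hom_ext (by simp)
  map_comp _ _ := coequalizer.hom_ext (by simp)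

noncomputable def toCokernelDiagram (V X : C) (s : Finset (V ⟶ X)) :
    X ⟶ (cokernelDiagram V X).obj s :=
  cokernel.π (descFinset V X s)

instance {V X : C} (s : Finset (V ⟶ X)) : Epi (toCokernelDiagram V X s) :=
  inferInstanceAs (Epi (cokernel.π _))

lemma toCokernelDiagram_comp_map {V X : C} {s t : Finset (V ⟶ X)} (φ : s ⟶ t) :
    toCokernelDiagram V X s ≫ (cokernelDiagram V X).map φ = toCokernelDiagram V X t :=
  cokernel.π_desc _ _ _

lemma comp_toCokernelDiagram {V X : C} {s : Finset (V ⟶ X)} {h : V ⟶ X} (hh : h ∈ s) :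
    h ≫ toCokernelDiagram V X s = 0 :=
  comp_cokernel_π_descFinset hh

lemma cokernelDiagram_cocone_ι_eq_zero {V : C} (hV : IsSeparator V) {X : C}
    (c : Cocone (cokernelDiagram V X)) (s : Finset (V ⟶ X)) : c.ι.app s = 0 := by
  classical
  refine (cancel_epi (toCokernelDiagram V X s)).1 (hV.def _ _ fun h => ?_)
  rw [comp_zero, comp_zero, ← c.w (homOfLE (Finset.subset_insert h s)),
    ← Category.assoc (toCokernelDiagram V X s), toCokernelDiagram_comp_map, ← Category.assoc,
    comp_toCokernelDiagram (Finset.mem_insert_self h s), zero_comp]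

variable [HasZeroObject C]

noncomputable def isColimitCokernelDiagramZeroCocone {V : C} (hV : IsSeparator V) (X : C) :
    IsColimit (⟨0, 0⟩ : Cocone (cokernelDiagram V X)) where
  desc _ := 0
  fac c s := by simp [cokernelDiagram_cocone_ι_eq_zero hV c s]
  uniq _ _ _ := (isZero_zero C).eq_of_src _ _

/-- The quotients of `X` by the images of finite sets of maps `V ⟶ X` have colimit `0`, so finite
generation of `X` kills one of the quotient maps. -/
theorem exists_finset_jointlyEpi_of_isSeparator {V : C} (hV : IsSeparator V) {X : C}
    (hX : IsFinitelyGenerated X) :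
    ∃ s : Finset (V ⟶ X), ∀ {Z : C} (a b : X ⟶ Z), (∀ h ∈ s, h ≫ a = h ≫ b) → a = b := by
  classical
  obtain ⟨t, φ, hφ⟩ := isFinitelyGenerated_iff.1 hX _ (cokernelDiagram V X) _
    (isColimitCokernelDiagramZeroCocone hV X) ∅ (toCokernelDiagram V X ∅) 0 (by simp)
  rw [toCokernelDiagram_comp_map, zero_comp] at hφ
  refine ⟨t, fun a b hab => sub_eq_zero.1 ?_⟩
  have hker : descFinset V X t ≫ (a - b) = 0 := Sigma.hom_ext _ _ fun ⟨h, hh⟩ => by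
    rw [← Category.assoc, ι_descFinset, Preadditive.comp_sub, hab h hh, sub_self, comp_zero]
  rw [← cokernel.π_desc _ _ hker]
  exact (hφ =≫ _).trans zero_comp

lemma isFinitelyGenerated_tensorObj [MonoidalCategory C] [MonoidalClosed C]
    (hV : IsSeparator (𝟙_ C)) {X Y : C} (hX : IsFinitelyGenerated X)
    (hY : IsFinitelyGenerated Y) : IsFinitelyGenerated (X ⊗ Y) := by
  obtain ⟨s, hs⟩ := exists_finset_jointlyEpi_of_isSeparator hV hY
  refine isFinitelyGenerated_of_jointlyEpi (fun h : s => (ρ_ X).inv ≫ X ◁ h.1) (fun _ => hX)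
    fun a b hab => MonoidalClosed.curry_injective (hs _ _ fun h hh => ?_)
  have hab' := hab ⟨h, hh⟩
  rw [Category.assoc, Category.assoc, cancel_epi] at hab'
  rw [← MonoidalClosed.curry_natural_left, ← MonoidalClosed.curry_natural_left, hab']

end Separator

open MonoidalCategory in
theorem statement9_general {C : Type u} [Category.{v} C] [Abelian C] [MonoidalCategory C]
    [MonoidalClosed C]
    (hV3 : IsSeparator (𝟙_ C))
    {X0 X1 Y0 Y1 : C} (f : X0 ⟶ X1) (g : Y0 ⟶ Y1)
    (hX0 : IsFinitelyGenerated X0) (hX1 : IsFinitelyGenerated X1)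
    (hY0 : IsFinitelyGenerated Y0) (hY1 : IsFinitelyGenerated Y1) :
    IsFinitelyGenerated (pushout (X0 ◁ g) (f ▷ Y0)) ∧ IsFinitelyGenerated (X1 ⊗ Y1) :=
  ⟨isFinitelyGenerated_pushout _ _ (isFinitelyGenerated_tensorObj hV3 hX0 hY1)
      (isFinitelyGenerated_tensorObj hV3 hX1 hY0),
    isFinitelyGenerated_tensorObj hV3 hX1 hY1⟩

open MonoidalCategory in
/-- In a locally presentable closed symmetric monoidal abelian category whose
unit is a finitely presented projective separator, the pushout product of two morphisms with
finitely generated (co)domains has finitely generated source and target. -/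
theorem statement9 {C : Type u} [Category.{v} C] [Abelian C] [MonoidalCategory C]
    [SymmetricCategory C] [MonoidalClosed C] [LocallyPresentable C]
    (hV1 : IsFinitelyPresented (𝟙_ C)) (hV2 : Projective (𝟙_ C))
    (hV3 : IsSeparator (𝟙_ C))
    {X0 X1 Y0 Y1 : C} (f : X0 ⟶ X1) (g : Y0 ⟶ Y1)
    (hX0 : IsFinitelyGenerated X0) (hX1 : IsFinitelyGenerated X1)
    (hY0 : IsFinitelyGenerated Y0) (hY1 : IsFinitelyGenerated Y1) :
    IsFinitelyGenerated (pushout (X0 ◁ g) (f ▷ Y0)) ∧ IsFinitelyGenerated (X1 ⊗ Y1) :=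
  statement9_general hV3 f g hX0 hX1 hY0 hY1

end Paper
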